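/- Let A be an n×n real matrix all of whose eigenvalues have strictly negative real part, and let b : ℝ → ℝⁿ be continuous and T₀-periodic with T₀ > 0. Then the ODE x' = Ax + b(t) admits a unique T₀-periodic solution, given by the initial condition x₀ = (I - exp(T₀A))⁻¹ exp(T₀A) ∫₀^{T₀} exp(-sA) b(s) ds. -/

import Mathlib

/-!
By uniqueness for Lipschitz ODEs, every solution of `x' = L x + b(t)` is given by the
variation-of-constants formula `x t = exp(tL) (x 0 + ∫₀ᵗ exp(-sL) b(s) ds)`. As `b` is `T`-periodic,
`t ↦ x (t + T)` solves the same equation, so `x` is `T`-periodic iff `x T = x 0`, i.e. iff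
`(1 - exp(TL)) (x 0) = exp(TL) ∫₀ᵀ exp(-sL) b(s) ds`, which has exactly one solution when
`1 - exp(TL)` is invertible. For a matrix `A`, a nonzero fixed vector of `exp(TA)` would yield,
because `A` commutes with `exp(TA)`, a common eigenvector `A v = z v` with `exp(Tz) = 1`,
forcing `Re z = 0`.
-/

open NormedSpace Set Function
open scoped Matrix

theorem ODE_solution_periodic {E : Type*} [NormedAddCommGroup E] [NormedSpace ℝ E]
    {v : ℝ → E → E} {K : NNReal} {x : ℝ → E} {T : ℝ}
    (hv : ∀ t, LipschitzWith K (v t)) (hvper : Periodic v T)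
    (hx : ∀ t, HasDerivAt x (v t (x t)) t) (hT : x T = x 0) : Periodic x T := by
  have hxT (t : ℝ) : HasDerivAt (fun s => x (s + T)) (v t (x (t + T))) t := by
    simpa only [hvper t] using (hx (t + T)).comp_add_const t T
  exact congrFun (ODE_solution_unique_univ (s := fun _ => univ) (t₀ := 0)
    (fun t => (hv t).lipschitzOnWith) (fun t => ⟨hxT t, mem_univ _⟩)
    (fun t => ⟨hx t, mem_univ _⟩) (by simpa using hT))

section VariationOfConstants

variable {E : Type*} [NormedAddCommGroup E] [NormedSpace ℝ E] [CompleteSpace E]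
  (L : E →L[ℝ] E) (b : ℝ → E)

noncomputable def variationOfConstants (c : E) (t : ℝ) : E :=
  exp (t • L) (c + ∫ s in (0 : ℝ)..t, exp ((-s) • L) (b s))

omit [CompleteSpace E] in
@[simp] lemma variationOfConstants_zero (c : E) : variationOfConstants L b c 0 = c := by
  simp [variationOfConstants]

lemma exp_smul_apply_exp_neg_smul (t : ℝ) (v : E) : exp (t • L) (exp ((-t) • L) v) = v := by
  let _ : NormedAlgebra ℚ (E →L[ℝ] E) := .restrictScalars ℚ ℝ _
  rw [← mul_apply_eq_comp, neg_smul, ← exp_add_of_commute (Commute.refl _).neg_right,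
    add_neg_cancel, exp_zero, one_apply_eq_self]

variable {L b}

lemma hasDerivAt_variationOfConstants (hb : Continuous b) (c : E) (t : ℝ) :
    HasDerivAt (variationOfConstants L b c) (L (variationOfConstants L b c t) + b t) t := by
  let _ : NormedAlgebra ℚ (E →L[ℝ] E) := .restrictScalars ℚ ℝ _
  have hint : Continuous fun s : ℝ => exp ((-s) • L) (b s) := by fun_prop
  have hy : HasDerivAt (fun u => c + ∫ s in (0 : ℝ)..u, exp ((-s) • L) (b s))
      (exp ((-t) • L) (b t)) t :=
    (hint.integral_hasStrictDerivAt 0 t).hasDerivAt.const_add c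
  have h := (hasDerivAt_exp_smul_const' L t).clm_apply hy
  rwa [mul_apply_eq_comp, exp_smul_apply_exp_neg_smul] at h

lemma eq_variationOfConstants (hb : Continuous b) {x : ℝ → E}
    (hx : ∀ t, HasDerivAt x (L (x t) + b t) t) : x = variationOfConstants L b (x 0) :=
  ODE_solution_unique_univ (v := fun t y => L y + b t) (s := fun _ => univ) (t₀ := 0)
    (fun t => (L.lipschitz.add (.const (b t))).lipschitzOnWith) (fun t => ⟨hx t, mem_univ _⟩)
    (fun t => ⟨hasDerivAt_variationOfConstants hb _ t, mem_univ _⟩) (by simp)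

end VariationOfConstants

section Periodic

variable {E : Type*} [NormedAddCommGroup E] [NormedSpace ℝ E] [CompleteSpace E]
  {L : E →L[ℝ] E} {b : ℝ → E} {T : ℝ}

lemma periodic_iff_one_sub_exp_smul_apply (hb : Continuous b) (hbper : Periodic b T)
    {x : ℝ → E} (hx : ∀ t, HasDerivAt x (L (x t) + b t) t) :
    Periodic x T ↔
      (1 - exp (T • L)) (x 0) = exp (T • L) (∫ s in (0 : ℝ)..T, exp ((-s) • L) (b s)) := by
  have hxT :
      x T = exp (T • L) (x 0) + exp (T • L) (∫ s in (0 : ℝ)..T, exp ((-s) • L) (b s)) := by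
    rw [congrFun (eq_variationOfConstants hb hx) T, variationOfConstants, map_add]
  rw [sub_apply, one_apply_eq_self, sub_eq_iff_eq_add', ← hxT]
  refine ⟨fun h => by simpa using (h 0).symm, fun h => ?_⟩
  exact ODE_solution_periodic (fun t => L.lipschitz.add (.const (b t)))
    (fun t => funext fun y => by rw [hbper t]) hx h.symm

theorem existsUnique_periodic_of_isUnit (hU : IsUnit (1 - exp (T • L))) (hb : Continuous b)
    (hbper : Periodic b T) :
    ∃! x : ℝ → E, (∀ t, HasDerivAt x (L (x t) + b t) t) ∧ Periodic x T := by
  obtain ⟨c, hc, hc_unique⟩ := (ContinuousLinearMap.isUnit_iff_bijective.mp hU).existsUnique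
    (exp (T • L) (∫ s in (0 : ℝ)..T, exp ((-s) • L) (b s)))
  have hxc := hasDerivAt_variationOfConstants (L := L) hb c
  refine ⟨variationOfConstants L b c, ⟨hxc, ?_⟩, ?_⟩
  · rwa [periodic_iff_one_sub_exp_smul_apply hb hbper hxc, variationOfConstants_zero]
  · rintro x ⟨hx, hper⟩
    rw [eq_variationOfConstants hb hx,
      hc_unique (x 0) ((periodic_iff_one_sub_exp_smul_apply hb hbper hx).mp hper)]

end Periodic

theorem Module.End.exists_hasEigenvector_of_commute {K V : Type*} [Field K] [IsAlgClosed K]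
    [AddCommGroup V] [Module K V] [FiniteDimensional K V] {f g : End K V} (hfg : Commute f g)
    {μ : K} (hμ : g.HasEigenvalue μ) : ∃ z v, f.HasEigenvector z v ∧ g v = μ • v := by
  have hmaps : MapsTo f (g.eigenspace μ) (g.eigenspace μ) :=
    mapsTo_genEigenspace_of_comm hfg.symm μ 1
  have : Nontrivial (g.eigenspace μ) := Submodule.nontrivial_iff_ne_bot.mpr hμ
  obtain ⟨z, hz⟩ := exists_eigenvalue (f.restrict hmaps)
  obtain ⟨w, hw⟩ := hz.exists_hasEigenvector
  refine ⟨z, w, ⟨mem_eigenspace_iff.mpr (congrArg Subtype.val hw.apply_eq_smul), ?_⟩,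
    mem_eigenspace_iff.mp w.2⟩
  simpa using hw.2

namespace Matrix

variable {m : Type*} [Fintype m] [DecidableEq m]

noncomputable def toCLM' : Matrix m m ℝ ≃ₐ[ℝ] ((m → ℝ) →L[ℝ] (m → ℝ)) :=
  toLinAlgEquiv'.trans (Module.End.toContinuousLinearMap (m → ℝ))

@[simp] lemma toCLM'_apply (A : Matrix m m ℝ) (v : m → ℝ) : toCLM' A v = A *ᵥ v := rfl

lemma toCLM'_exp (A : Matrix m m ℝ) : toCLM' (exp A) = exp (toCLM' A) := by
  -- `exp` depends only on the topology, so any of the equivalent matrix norms will do.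
  let _ : NormedRing (Matrix m m ℝ) := Matrix.linftyOpNormedRing
  let _ : NormedAlgebra ℝ (Matrix m m ℝ) := Matrix.linftyOpNormedAlgebra
  let _ : NormedAlgebra ℚ (Matrix m m ℝ) := .restrictScalars ℚ ℝ _
  let _ : NormedAlgebra ℚ ((m → ℝ) →L[ℝ] (m → ℝ)) := .restrictScalars ℚ ℝ _
  exact map_exp toCLM' toCLM'.toLinearMap.continuous_of_finiteDimensional A

lemma ofRealHom_mapMatrix_exp (A : Matrix m m ℝ) :
    Complex.ofRealHom.mapMatrix (exp A) = exp (Complex.ofRealHom.mapMatrix A) := by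
  let _ : NormedRing (Matrix m m ℝ) := Matrix.linftyOpNormedRing
  let _ : NormedAlgebra ℝ (Matrix m m ℝ) := Matrix.linftyOpNormedAlgebra
  let _ : NormedAlgebra ℚ (Matrix m m ℝ) := .restrictScalars ℚ ℝ _
  let _ : NormedRing (Matrix m m ℂ) := Matrix.linftyOpNormedRing
  let _ : NormedAlgebra ℂ (Matrix m m ℂ) := Matrix.linftyOpNormedAlgebra
  let _ : NormedAlgebra ℚ (Matrix m m ℂ) := .restrictScalars ℚ ℂ _
  exact map_exp Complex.ofRealHom.mapMatrix (continuous_id.matrix_map Complex.continuous_ofReal) A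

lemma exp_mulVec_of_mulVec_eq_smul {M : Matrix m m ℂ} {z : ℂ} {v : m → ℂ}
    (h : M *ᵥ v = z • v) : exp M *ᵥ v = Complex.exp z • v := by
  let _ : NormedRing (Matrix m m ℂ) := Matrix.linftyOpNormedRing
  let _ : NormedAlgebra ℂ (Matrix m m ℂ) := Matrix.linftyOpNormedAlgebra
  have hpow (k : ℕ) : M ^ k *ᵥ v = z ^ k • v := by
    induction k with
    | zero => simp
    | succ k ih => rw [pow_succ', ← mulVec_mulVec, ih, mulVec_smul, h, smul_smul, ← pow_succ]
  have hM := (exp_series_hasSum_exp' (𝕂 := ℂ) M).map (mulVec.addMonoidHomLeft v)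
    (continuous_id.matrix_mulVec continuous_const)
  have hz := (exp_series_hasSum_exp' (𝕂 := ℂ) z).smul_const v
  rw [Complex.exp_eq_exp_ℂ]
  refine hM.unique (hz.congr_fun fun k => ?_)
  change ((k.factorial⁻¹ : ℂ) • M ^ k) *ᵥ v = _
  rw [smul_mulVec, hpow, smul_smul, smul_eq_mul]

theorem isUnit_one_sub_exp_of_exp_ne_one {M : Matrix m m ℂ}
    (hM : ∀ z v, v ≠ 0 → M *ᵥ v = z • v → Complex.exp z ≠ 1) : IsUnit (1 - exp M) := by
  by_contra hU
  rw [isUnit_iff_isUnit_det, isUnit_iff_ne_zero, not_not] at hU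
  obtain ⟨w, hw0, hw⟩ := exists_mulVec_eq_zero_iff.mpr hU
  have hfix : Module.End.HasEigenvalue (toLinAlgEquiv' (exp M)) 1 :=
    Module.End.hasEigenvalue_of_hasEigenvector (x := w)
      ⟨Module.End.mem_eigenspace_iff.mpr (by simpa [sub_mulVec, sub_eq_zero, eq_comm] using hw),
        hw0⟩
  obtain ⟨z, v, hv, hv1⟩ := Module.End.exists_hasEigenvector_of_commute
    ((Commute.refl M).exp_right.map toLinAlgEquiv') hfix
  refine hM z v hv.2 hv.apply_eq_smul (smul_left_injective ℂ hv.2 ?_)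
  simpa [← exp_mulVec_of_mulVec_eq_smul hv.apply_eq_smul] using hv1

theorem isUnit_one_sub_exp_smul {A : Matrix m m ℝ}
    (hA : ∀ (z : ℂ) (v : m → ℂ), v ≠ 0 → A.map (fun a => (a : ℂ)) *ᵥ v = z • v → z.re ≠ 0)
    {T : ℝ} (hT : T ≠ 0) :
    IsUnit (1 - exp (T • A)) := by
  have hC : IsUnit (1 - exp ((T : ℂ) • A.map (fun a => (a : ℂ)))) := by
    refine isUnit_one_sub_exp_of_exp_ne_one fun z v hv h hz => ?_
    have hre : (z / T).re ≠ 0 := by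
      refine hA _ v hv ?_
      rw [smul_mulVec] at h
      rw [div_eq_inv_mul, ← smul_smul, ← h, smul_smul,
        inv_mul_cancel₀ (Complex.ofReal_ne_zero.mpr hT), one_smul]
    rw [Complex.div_ofReal_re] at hre
    apply_fun (‖·‖) at hz
    rw [Complex.norm_exp, norm_one, Real.exp_eq_one_iff] at hz
    exact hre (by simp [hz])
  have hmap : Complex.ofRealHom.mapMatrix (1 - exp (T • A)) =
      1 - exp ((T : ℂ) • A.map (fun a => (a : ℂ))) := by
    rw [map_sub, map_one, ofRealHom_mapMatrix_exp]
    congr 2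
    ext i j
    simp
  rw [isUnit_iff_isUnit_det, isUnit_iff_ne_zero] at hC ⊢
  rw [← hmap, ← RingHom.map_det] at hC
  simpa using hC

end Matrix

/-- If all complex eigenvalues of the real matrix `A` have strictly negative real part and
`b` is continuous and `T₀`-periodic (`T₀ > 0`), then `x' = Ax + b(t)` admits a unique
`T₀`-periodic solution, whose initial condition is
`x₀ = (I - exp(T₀A))⁻¹ exp(T₀A) ∫₀^{T₀} exp(-sA) b(s) ds`. -/
theorem unique_periodic_solution {n : ℕ} (A : Matrix (Fin n) (Fin n) ℝ)
    (heig : ∀ (z : ℂ) (v : Fin n → ℂ), v ≠ 0 →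
      (A.map (fun a => (a : ℂ))).mulVec v = z • v → z.re < 0)
    (T₀ : ℝ) (hT₀ : 0 < T₀)
    (b : ℝ → (Fin n → ℝ)) (hb : Continuous b) (hbper : Function.Periodic b T₀) :
    (∃! x : ℝ → (Fin n → ℝ),
        (∀ t, HasDerivAt x (A.mulVec (x t) + b t) t) ∧ Function.Periodic x T₀) ∧
    (∀ x : ℝ → (Fin n → ℝ),
        (∀ t, HasDerivAt x (A.mulVec (x t) + b t) t) → Function.Periodic x T₀ →
        x 0 = ((1 - exp (T₀ • A))⁻¹ * exp (T₀ • A)).mulVec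
          (∫ s in (0:ℝ)..T₀, (exp ((-s) • A)).mulVec (b s))) := by
  have hexp (t : ℝ) : exp (t • Matrix.toCLM' A) = Matrix.toCLM' (exp (t • A)) := by
    rw [Matrix.toCLM'_exp, map_smul]
  have hUA : IsUnit (1 - exp (T₀ • A)) :=
    Matrix.isUnit_one_sub_exp_smul (fun z v hv h => (heig z v hv h).ne) hT₀.ne'
  have hU : IsUnit (1 - exp (T₀ • Matrix.toCLM' A)) := by
    rw [hexp, ← map_one Matrix.toCLM', ← map_sub]
    exact hUA.map _
  refine ⟨existsUnique_periodic_of_isUnit hU hb hbper, fun x hx hper => ?_⟩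
  have hfix : (1 - exp (T₀ • A)) *ᵥ x 0 =
      exp (T₀ • A) *ᵥ ∫ s in (0 : ℝ)..T₀, exp ((-s) • A) *ᵥ b s := by
    have h := (periodic_iff_one_sub_exp_smul_apply hb hbper (L := Matrix.toCLM' A) hx).mp hper
    simp only [hexp, Matrix.toCLM'_apply] at h
    rwa [← map_one Matrix.toCLM', ← map_sub, Matrix.toCLM'_apply] at h
  rw [← Matrix.mulVec_mulVec, ← hfix, Matrix.mulVec_mulVec,
    Matrix.nonsing_inv_mul _ ((Matrix.isUnit_iff_isUnit_det _).mp hUA), Matrix.one_mulVec]
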